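/- Let F be a field, R an associative F-algebra, and A, B, C F-subspaces of R. For subspaces X, Y of R let XY denote the span of all products xy (x ∈ X, y ∈ Y), let [X,Y] denote the span of all commutators xy − yx, and define [X,_0 Y] = X and [X,_{n+1} Y] = [[X,_n Y], Y]. Then for every n ≥ 0, [AB,_n C] ⊆ Σ_{i=0}^{n} [A,_i C]·[B,_{n−i} C]. -/
import Mathlib


/-- The span of commutators `[x,y] = x*y - y*x` with `x ∈ X`, `y ∈ Y`, for `F`-subspaces
`X, Y` of an associative `F`-algebra `R`. -/
def submBracket {F : Type*} [Field F] {R : Type*} [Ring R] [Algebra F R]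
    (X Y : Submodule F R) : Submodule F R :=
  Submodule.span F {z : R | ∃ x ∈ X, ∃ y ∈ Y, z = x * y - y * x}

/-- Iterated bracket of subspaces: `[X,_0 Y] = X`, `[X,_{n+1} Y] = [[X,_n Y], Y]`. -/
def submBracketIter {F : Type*} [Field F] {R : Type*} [Ring R] [Algebra F R]
    (X Y : Submodule F R) : ℕ → Submodule F R
  | 0 => X
  | n + 1 => submBracket (submBracketIter X Y n) Y

section helpers
variable {F : Type*} [Field F] {R : Type*} [Ring R] [Algebra F R]

lemma bracket_le {X Y M : Submodule F R}
    (h : ∀ x ∈ X, ∀ y ∈ Y, x * y - y * x ∈ M) : submBracket X Y ≤ M := by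
  apply Submodule.span_le.2
  rintro z ⟨x, hx, y, hy, rfl⟩
  exact h x hx y hy

lemma mem_bracket {X Y : Submodule F R} {x y : R} (hx : x ∈ X) (hy : y ∈ Y) :
    x * y - y * x ∈ submBracket X Y :=
  Submodule.subset_span ⟨x, hx, y, hy, rfl⟩

lemma bracket_mono_left {X X' Y : Submodule F R} (h : X ≤ X') :
    submBracket X Y ≤ submBracket X' Y :=
  bracket_le fun x hx y hy => mem_bracket (h hx) hy

lemma sum_le_of_forall {ι : Type*} {s : Finset ι} {f : ι → Submodule F R} {T : Submodule F R}
    (h : ∀ i ∈ s, f i ≤ T) : ∑ i ∈ s, f i ≤ T := by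
  classical
  induction s using Finset.cons_induction with
  | empty => simp
  | cons a s ha ih =>
    rw [Finset.sum_cons, Submodule.add_eq_sup]
    exact sup_le (h a (Finset.mem_cons_self a s)) (ih fun i hi => h i (Finset.mem_cons_of_mem hi))

lemma le_sum_of_mem {ι : Type*} {s : Finset ι} {f : ι → Submodule F R} {i : ι} (hi : i ∈ s) :
    f i ≤ ∑ j ∈ s, f j := by
  classical
  calc f i = ∑ j ∈ {i}, f j := by simp
  _ ≤ ∑ j ∈ s, f j := Finset.sum_le_sum_of_subset (Finset.singleton_subset_iff.2 hi)

lemma bracket_sum_left {ι : Type*} {s : Finset ι} {f : ι → Submodule F R} {Z : Submodule F R} :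
    submBracket (∑ i ∈ s, f i) Z ≤ ∑ i ∈ s, submBracket (f i) Z := by
  apply bracket_le
  intro x hx z hz
  -- x ↦ x*z - z*x is linear
  let L : R →ₗ[F] R := LinearMap.mulRight F z - LinearMap.mulLeft F z
  have hL : ∀ w, L w = w * z - z * w := fun w => rfl
  have : (∑ i ∈ s, f i) ≤ (∑ i ∈ s, submBracket (f i) Z).comap L := by
    apply sum_le_of_forall
    intro i hi w hw
    simp only [Submodule.mem_comap, hL]
    exact le_sum_of_mem hi (mem_bracket hw hz)
  simpa [hL] using this hx

lemma bracket_mul {X Y Z : Submodule F R} :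
    submBracket (X * Y) Z ≤ X * submBracket Y Z + submBracket X Z * Y := by
  apply bracket_le
  intro w hw z hz
  let L : R →ₗ[F] R := LinearMap.mulRight F z - LinearMap.mulLeft F z
  have hL : ∀ w, L w = w * z - z * w := fun w => rfl
  have : X * Y ≤ (X * submBracket Y Z + submBracket X Z * Y).comap L := by
    apply Submodule.mul_le.2
    intro x hx y hy
    simp only [Submodule.mem_comap, hL]
    have key : x * y * z - z * (x * y) = x * (y * z - z * y) + (x * z - z * x) * y := by
      noncomm_ring
    rw [key, Submodule.add_eq_sup]
    exact Submodule.add_mem _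
      (Submodule.mem_sup_left (Submodule.mul_mem_mul hx (mem_bracket hy hz)))
      (Submodule.mem_sup_right (Submodule.mul_mem_mul (mem_bracket hx hz) hy))
  simpa [hL] using this hw

end helpers

/-- For subspaces `A, B, C` of an associative `F`-algebra `R` and every `n ≥ 0`,
`[AB,_n C] ⊆ Σ_{i=0}^{n} [A,_i C]·[B,_{n-i} C]`. -/
theorem stmt_8 {F : Type*} [Field F] {R : Type*} [Ring R] [Algebra F R]
    (A B C : Submodule F R) (n : ℕ) :
    submBracketIter (A * B) C n ≤
      ∑ i ∈ Finset.range (n + 1), submBracketIter A C i * submBracketIter B C (n - i) := by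
  induction n with
  | zero => simp [submBracketIter]
  | succ n ih =>
    calc submBracketIter (A * B) C (n + 1)
        = submBracket (submBracketIter (A * B) C n) C := rfl
      _ ≤ submBracket (∑ i ∈ Finset.range (n + 1),
            submBracketIter A C i * submBracketIter B C (n - i)) C := bracket_mono_left ih
      _ ≤ ∑ i ∈ Finset.range (n + 1),
            submBracket (submBracketIter A C i * submBracketIter B C (n - i)) C :=
          bracket_sum_left
      _ ≤ ∑ i ∈ Finset.range (n + 1 + 1),
            submBracketIter A C i * submBracketIter B C (n + 1 - i) := by
          apply sum_le_of_forall
          intro i hi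
          have hin : i ≤ n := Finset.mem_range_succ_iff.1 hi
          refine bracket_mul.trans ?_
          rw [Submodule.add_eq_sup]
          apply sup_le
          · refine le_trans (le_of_eq ?_)
              (le_sum_of_mem (Finset.mem_range.2 (by omega : i < n + 1 + 1)))
            congr 1
            have e : n + 1 - i = (n - i) + 1 := by omega
            rw [e, submBracketIter]
          · refine le_trans (le_of_eq ?_)
              (le_sum_of_mem (Finset.mem_range.2 (by omega : i + 1 < n + 1 + 1)))
            congr 2
            omega
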